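/- arXiv:1407.1601 — 8 statements merged into one kernel-verified Lean document; each statement's English description precedes it below -/
import Mathlib

section
/- Under the EDF schedule for (x, s) with x ∈ ℝ₊^N and s ∈ ℝ₊^N, the firm energy allocated to each demand class equals the negative part of the residual process: for every k = 1, …, N, v_{k−1}^k = max{0, −ξ_k(x, s)}, and v_t^j = 0 whenever t ≠ j − 1. -/
private lemma edf_L1 (s A b : ℝ) (hs : 0 ≤ s) (hA : 0 ≤ A) (hb : 0 ≤ b) :
    min s A + min b (s - min s A) = min s (A + b) := by
  simp only [min_def]; split_ifs <;> linarith

private lemma edf_L2 (M s xx T : ℝ) (hs : 0 ≤ s) (hT : 0 ≤ T) :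
    (max 0 (xx + T - M) - max 0 (xx - M))
      - (min s (max 0 (xx + T - M)) - min s (max 0 (xx - M)))
      = max 0 (T - max 0 (M + s - xx)) := by
  simp only [max_def, min_def]; split_ifs <;> linarith

private lemma edf_L3 (M s xx : ℝ) (hs : 0 ≤ s) :
    max 0 (xx - M) - min (max 0 (xx - M)) s = max 0 (-(M + s - xx)) := by
  simp only [max_def, min_def]; split_ifs <;> linarith


/-- The residual process: `ξ_0 = 0`, `ξ_{k+1} = max{0, ξ_k} + s_k - x_{k+1}`. -/
noncomputable def resid (x s : ℕ → ℝ) : ℕ → ℝ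
  | 0 => 0
  | k + 1 => max 0 (resid x s k) + s k - x (k + 1)

/-- Under the EDF schedule for `(x, s)` with `x ∈ ℝ₊^N`, `s ∈ ℝ₊^N`,
the firm energy allocated to each demand class equals the negative part of the residual
process: `v_{k-1}^k = max{0, -ξ_k(x,s)}` for `k = 1, …, N`, and `v_t^j = 0` whenever
`t ≠ j - 1`.  The EDF schedule (`z`, `u`, `v`) is characterized by the recursion given
in the hypotheses. -/
theorem edf_firm_supply_eq_neg_part_residual
    (N : ℕ) (hN : 1 ≤ N) (x s : ℕ → ℝ)
    (hx : ∀ j, 1 ≤ j → j ≤ N → 0 ≤ x j)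
    (hs : ∀ k, k < N → 0 ≤ s k)
    (z u v : ℕ → ℕ → ℝ)
    (hz0 : ∀ j, z 0 j = x j)
    (hu : ∀ k, k < N → ∀ j, 1 ≤ j → j ≤ N →
      u k j = min (z k j) (s k - ∑ i ∈ Finset.Ico 1 j, u k i))
    (hv : ∀ k, k < N → ∀ j, 1 ≤ j → j ≤ N →
      v k j = if k = j - 1 then z k j - u k j else 0)
    (hz : ∀ k, k < N → ∀ j, 1 ≤ j → j ≤ N →
      z (k + 1) j = z k j - u k j - v k j) :
    (∀ k, 1 ≤ k → k ≤ N → v (k - 1) k = max 0 (-(resid x s k))) ∧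
    (∀ t, t < N → ∀ j, 1 ≤ j → j ≤ N → t ≠ j - 1 → v t j = 0) := by
  -- Abbreviation for the positive part of the residual
  set M : ℕ → ℝ := fun k => max 0 (resid x s k) with hM
  have hM0 : ∀ k, 0 ≤ M k := fun k => le_max_left _ _
  -- nonnegativity of partial sums of x
  have hxsum : ∀ a m, 1 ≤ a → m ≤ N + 1 → 0 ≤ ∑ i ∈ Finset.Ico a m, x i := by
    intro a m ha hm
    apply Finset.sum_nonneg
    intro i hi
    rw [Finset.mem_Ico] at hi
    exact hx i (le_trans ha hi.1) (by omega)
  -- from the partial-sum invariant, each z k j (j > k) is nonnegative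
  have zposGen : ∀ k, k ≤ N →
      (∀ m, m ≤ N + 1 → ∑ i ∈ Finset.Ico (k+1) m, z k i
          = max 0 ((∑ i ∈ Finset.Ico (k+1) m, x i) - M k)) →
      ∀ j, k + 1 ≤ j → j ≤ N → 0 ≤ z k j := by
    intro k hk h2 j hj hjN
    have e1 := h2 (j+1) (by omega)
    have e2 := h2 j (by omega)
    rw [Finset.sum_Ico_succ_top hj, Finset.sum_Ico_succ_top hj] at e1
    have hxj : 0 ≤ x j := hx j (by omega) hjN
    have hmono : max 0 ((∑ i ∈ Finset.Ico (k+1) j, x i) - M k)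
        ≤ max 0 ((∑ i ∈ Finset.Ico (k+1) j, x i) + x j - M k) :=
      max_le_max le_rfl (by linarith)
    linarith
  -- the greedy allocation formula for u
  have usumGen : ∀ k, k < N →
      (∀ i, 1 ≤ i → i ≤ k → z k i = 0) →
      (∀ m, m ≤ N + 1 → ∑ i ∈ Finset.Ico (k+1) m, z k i
          = max 0 ((∑ i ∈ Finset.Ico (k+1) m, x i) - M k)) →
      ∀ m, m ≤ N + 1 → ∑ i ∈ Finset.Ico 1 m, u k i
          = min (s k) (∑ i ∈ Finset.Ico (k+1) m, z k i) := by
    intro k hkN h1 h2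
    have hsk : 0 ≤ s k := hs k hkN
    intro m
    induction m with
    | zero => simp [min_eq_right hsk]
    | succ m ihm =>
      intro hm1
      by_cases hm0 : m = 0
      · subst hm0
        rw [Finset.Ico_self 1,
            Finset.Ico_eq_empty (by omega)]
        simp [min_eq_right hsk]
      · have hm : 1 ≤ m := by omega
        rw [Finset.sum_Ico_succ_top hm]
        have hum := hu k hkN m hm (by omega)
        rw [ihm (by omega)] at hum
        by_cases hmk : m ≤ k
        · have hz0' : z k m = 0 := h1 m hm hmk
          rw [Finset.Ico_eq_empty (show ¬ k + 1 < m by omega),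
              Finset.Ico_eq_empty (show ¬ k + 1 < m + 1 by omega)] at *
          rw [ihm (by omega), hum, hz0']
          simp [min_eq_right hsk, min_eq_left hsk]
        · have hkm : k + 1 ≤ m := by omega
          rw [Finset.sum_Ico_succ_top hkm, ihm (by omega), hum]
          have hA : 0 ≤ ∑ i ∈ Finset.Ico (k+1) m, z k i := by
            rw [h2 m (by omega)]; exact le_max_left _ _
          have hb : 0 ≤ z k m := zposGen k (le_of_lt hkN) h2 m hkm (by omega)
          exact edf_L1 (s k) _ _ hsk hA hb
  -- value of z k (k+1)
  have zsingGen : ∀ k, k < N →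
      (∀ m, m ≤ N + 1 → ∑ i ∈ Finset.Ico (k+1) m, z k i
          = max 0 ((∑ i ∈ Finset.Ico (k+1) m, x i) - M k)) →
      z k (k+1) = max 0 (x (k+1) - M k) := by
    intro k hkN h2
    have e := h2 (k+2) (by omega)
    rw [Finset.sum_Ico_succ_top (le_refl (k+1)), Finset.sum_Ico_succ_top (le_refl (k+1)),
        Finset.Ico_self, Finset.sum_empty, Finset.sum_empty, zero_add, zero_add] at e
    exact e
  -- the main invariant
  have key : ∀ k, k ≤ N →
      (∀ i, 1 ≤ i → i ≤ k → z k i = 0) ∧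
      (∀ m, m ≤ N + 1 → ∑ i ∈ Finset.Ico (k+1) m, z k i
          = max 0 ((∑ i ∈ Finset.Ico (k+1) m, x i) - M k)) := by
    intro k
    induction k with
    | zero =>
      intro _
      refine ⟨fun i hi hi0 => absurd (le_trans hi hi0) (by omega), fun m hm => ?_⟩
      have hMz : M 0 = 0 := by simp [hM, resid]
      rw [hMz, Finset.sum_congr rfl (fun i _ => hz0 i), sub_zero,
          max_eq_right (hxsum 1 m le_rfl hm)]
    | succ k ih =>
      intro hk1
      have hkN : k < N := hk1
      obtain ⟨h1, h2⟩ := ih (le_of_lt hkN)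
      have hsk : 0 ≤ s k := hs k hkN
      have usum := usumGen k hkN h1 h2
      have zk1 := zsingGen k hkN h2
      have hMsucc : M (k+1) = max 0 (M k + s k - x (k+1)) := by
        simp [hM, resid]
      -- u k i = 0 for i ≤ k
      have hu0 : ∀ i, 1 ≤ i → i ≤ k → u k i = 0 := by
        intro i hi1 hik
        have e1 := usum (i+1) (by omega)
        have e2 := usum i (by omega)
        rw [Finset.sum_Ico_succ_top hi1] at e1
        rw [Finset.Ico_eq_empty (show ¬ k + 1 < i + 1 by omega), Finset.sum_empty,
            min_eq_right hsk] at e1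
        rw [Finset.Ico_eq_empty (show ¬ k + 1 < i by omega), Finset.sum_empty,
            min_eq_right hsk] at e2
        linarith
      constructor
      · -- classes ≤ k+1 fully served
        intro i hi1 hik1
        have hiN : i ≤ N := by omega
        rw [hz k hkN i hi1 hiN]
        by_cases hik : i = k + 1
        · subst hik
          rw [hv k hkN (k+1) hi1 hiN, if_pos (by omega)]
          ring
        · have hik' : i ≤ k := by omega
          rw [hv k hkN i hi1 hiN, if_neg (by omega), h1 i hi1 hik', hu0 i hi1 hik']
          ring
      · -- partial sum invariant at k+1
        intro m hm
        by_cases hm2 : m ≤ k + 1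
        · rw [Finset.Ico_eq_empty (show ¬ k + 2 < m by omega)]
          simp only [Finset.sum_empty, zero_sub]
          rw [max_eq_left (by simpa using neg_nonpos_of_nonneg (hM0 (k+1)))]
        · have hm2' : k + 2 ≤ m := by omega
          have hterm : ∀ i ∈ Finset.Ico (k+2) m, z (k+1) i = z k i - u k i := by
            intro i hi
            rw [Finset.mem_Ico] at hi
            rw [hz k hkN i (by omega) (by omega), hv k hkN i (by omega) (by omega),
                if_neg (by omega)]
            ring
          rw [Finset.sum_congr rfl hterm, Finset.sum_sub_distrib]
          -- rewrite the u-sum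
          have husplit : ∑ i ∈ Finset.Ico 1 (k+2), u k i + ∑ i ∈ Finset.Ico (k+2) m, u k i
              = ∑ i ∈ Finset.Ico 1 m, u k i :=
            Finset.sum_Ico_consecutive _ (by omega) (by omega)
          have hu1 : ∑ i ∈ Finset.Ico 1 (k+2), u k i = min (s k) (z k (k+1)) := by
            rw [usum (k+2) (by omega), Finset.sum_Ico_succ_top (le_refl (k+1)),
                Finset.Ico_self, Finset.sum_empty, zero_add]
          have hu2 : ∑ i ∈ Finset.Ico 1 m, u k i
              = min (s k) (∑ i ∈ Finset.Ico (k+1) m, z k i) := usum m hm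
          -- rewrite the z-sum
          have hzsplit : ∑ i ∈ Finset.Ico (k+1) m, z k i
              = z k (k+1) + ∑ i ∈ Finset.Ico (k+2) m, z k i :=
            Finset.sum_eq_sum_Ico_succ_bot (by omega) _
          have hxsplit : ∑ i ∈ Finset.Ico (k+1) m, x i
              = x (k+1) + ∑ i ∈ Finset.Ico (k+2) m, x i :=
            Finset.sum_eq_sum_Ico_succ_bot (by omega) _
          have hT : 0 ≤ ∑ i ∈ Finset.Ico (k+2) m, x i := hxsum (k+2) m (by omega) hm
          have hA := h2 m hm
          rw [hxsplit] at hA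
          have goal := edf_L2 (M k) (s k) (x (k+1)) (∑ i ∈ Finset.Ico (k+2) m, x i) hsk hT
          rw [hMsucc]
          rw [← hA, ← zk1] at goal
          rw [hzsplit] at hA
          linarith [goal, husplit, hu1, hu2, hA]
  -- conclusions
  constructor
  · intro k hk1 hkN
    obtain ⟨t, rfl⟩ : ∃ t, k = t + 1 := ⟨k - 1, by omega⟩
    have htN : t < N := by omega
    obtain ⟨h1, h2⟩ := key t (le_of_lt htN)
    have hst : 0 ≤ s t := hs t htN
    have usum := usumGen t htN h1 h2
    have zk1 := zsingGen t htN h2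
    have hsum0 : ∑ i ∈ Finset.Ico 1 (t+1), u t i = 0 := by
      rw [usum (t+1) (by omega), Finset.Ico_self, Finset.sum_empty, min_eq_right hst]
    have hut := hu t htN (t+1) (by omega) (by omega)
    rw [hsum0, sub_zero] at hut
    have hresid : resid x s (t+1) = M t + s t - x (t+1) := by simp [hM, resid]
    rw [show t + 1 - 1 = t by omega, hv t htN (t+1) (by omega) (by omega),
        if_pos (by omega), hut, zk1, hresid]
    exact edf_L3 (M t) (s t) (x (t+1)) hst
  · intro t htN j hj1 hjN hne
    rw [hv t htN j hj1 hjN, if_neg hne]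
end

section
/- The EDF schedule is feasible: for x ∈ ℝ₊^N and s ∈ ℝ₊^N, the EDF recursion satisfies, for every k = 0,…,N−1 and j = 1,…,N: z_k^j ≥ 0, z_k^j = 0 whenever j ≤ k, u_k^j ≥ 0, v_k^j ≥ 0, Σ_{j=1}^N u_k^j ≤ s_k, and Σ_{t=0}^{j−1} (u_t^j + v_t^j) = x_j for every j; in particular z_N = 0. -/
/-- Feasibility of the EDF schedule: for `x ∈ ℝ₊^N`, `s ∈ ℝ₊^N`, the EDF
recursion (given in the hypotheses) satisfies, for every `k = 0,…,N-1` and `j = 1,…,N`: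
`z_k^j ≥ 0`, `z_k^j = 0` whenever `j ≤ k`, `u_k^j ≥ 0`, `v_k^j ≥ 0`,
`Σ_{j=1}^N u_k^j ≤ s_k`, and `Σ_{t=0}^{j-1} (u_t^j + v_t^j) = x_j` for every `j`;
in particular `z_N = 0`. -/
theorem edf_schedule_feasible
    (N : ℕ) (hN : 1 ≤ N) (x s : ℕ → ℝ)
    (hx : ∀ j, 1 ≤ j → j ≤ N → 0 ≤ x j)
    (hs : ∀ k, k < N → 0 ≤ s k)
    (z u v : ℕ → ℕ → ℝ)
    (hz0 : ∀ j, z 0 j = x j)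
    (hu : ∀ k, k < N → ∀ j, 1 ≤ j → j ≤ N →
      u k j = min (z k j) (s k - ∑ i ∈ Finset.Ico 1 j, u k i))
    (hv : ∀ k, k < N → ∀ j, 1 ≤ j → j ≤ N →
      v k j = if k = j - 1 then z k j - u k j else 0)
    (hz : ∀ k, k < N → ∀ j, 1 ≤ j → j ≤ N →
      z (k + 1) j = z k j - u k j - v k j) :
    (∀ k, k < N → ∀ j, 1 ≤ j → j ≤ N →
      0 ≤ z k j ∧ (j ≤ k → z k j = 0) ∧ 0 ≤ u k j ∧ 0 ≤ v k j) ∧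
    (∀ k, k < N → ∑ j ∈ Finset.Icc 1 N, u k j ≤ s k) ∧
    (∀ j, 1 ≤ j → j ≤ N → ∑ t ∈ Finset.range j, (u t j + v t j) = x j) ∧
    (∀ j, 1 ≤ j → j ≤ N → z N j = 0) := by
  -- Remaining supply is nonnegative, provided z k · ≥ 0
  have hR : ∀ k, k < N → (∀ j, 1 ≤ j → j ≤ N → 0 ≤ z k j) →
      ∀ j, j ≤ N → 0 ≤ s k - ∑ i ∈ Finset.Ico 1 (j+1), u k i := by
    intro k hk hzk j
    induction j with
    | zero => intro _; simpa using hs k hk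
    | succ n ih =>
      intro hn
      have h1 : 0 ≤ s k - ∑ i ∈ Finset.Ico 1 (n+1), u k i := ih (by omega)
      have hu' := hu k hk (n+1) (by omega) hn
      rw [Finset.sum_Ico_succ_top (by omega)]
      have h2 : u k (n+1) ≤ s k - ∑ i ∈ Finset.Ico 1 (n+1), u k i := by
        rw [hu']; exact min_le_right _ _
      linarith
  have hupos : ∀ k, k < N → (∀ j, 1 ≤ j → j ≤ N → 0 ≤ z k j) →
      ∀ j, 1 ≤ j → j ≤ N → 0 ≤ u k j := by
    intro k hk hzk j hj1 hjN
    rw [hu k hk j hj1 hjN]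
    have h1 : 0 ≤ s k - ∑ i ∈ Finset.Ico 1 j, u k i := by
      have h := hR k hk hzk (j-1) (by omega)
      have hj : j - 1 + 1 = j := by omega
      rwa [hj] at h
    exact le_min (hzk j hj1 hjN) h1
  have hule : ∀ k, k < N → ∀ j, 1 ≤ j → j ≤ N → u k j ≤ z k j := by
    intro k hk j hj1 hjN
    rw [hu k hk j hj1 hjN]; exact min_le_left _ _
  -- Main invariant by induction on k
  have hQ : ∀ k, k ≤ N → ∀ j, 1 ≤ j → j ≤ N → 0 ≤ z k j ∧ (j ≤ k → z k j = 0) := by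
    intro k
    induction k with
    | zero =>
      intro _ j hj1 hjN
      exact ⟨by rw [hz0]; exact hx j hj1 hjN, by omega⟩
    | succ n ih =>
      intro hn j hj1 hjN
      have hkn : n < N := by omega
      have hzk : ∀ j, 1 ≤ j → j ≤ N → 0 ≤ z n j := fun j a b => (ih (by omega) j a b).1
      have hu0 := hupos n hkn hzk j hj1 hjN
      have hul := hule n hkn j hj1 hjN
      have hzrec := hz n hkn j hj1 hjN
      have hvj := hv n hkn j hj1 hjN
      by_cases hcase : n = j - 1
      · have h0 : z (n+1) j = 0 := by rw [hzrec, hvj, if_pos hcase]; ring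
        exact ⟨le_of_eq h0.symm, fun _ => h0⟩
      · constructor
        · rw [hzrec, hvj, if_neg hcase]
          have := hzk j hj1 hjN
          linarith
        · intro hle
          have hjn : j ≤ n := by omega
          have hz0' : z n j = 0 := (ih (by omega) j hj1 hjN).2 hjn
          rw [hzrec, hvj, if_neg hcase, hz0']
          have h3 : u n j ≤ 0 := by rw [← hz0']; exact hul
          linarith
  refine ⟨?_, ?_, ?_, ?_⟩
  · intro k hk j hj1 hjN
    have hzk : ∀ j, 1 ≤ j → j ≤ N → 0 ≤ z k j := fun j a b => (hQ k (by omega) j a b).1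
    refine ⟨hzk j hj1 hjN, fun h => (hQ k (by omega) j hj1 hjN).2 h, hupos k hk hzk j hj1 hjN, ?_⟩
    rw [hv k hk j hj1 hjN]
    split
    · have := hule k hk j hj1 hjN; linarith
    · exact le_refl 0
  · intro k hk
    have hzk : ∀ j, 1 ≤ j → j ≤ N → 0 ≤ z k j := fun j a b => (hQ k (by omega) j a b).1
    have h := hR k hk hzk N le_rfl
    have : Finset.Icc 1 N = Finset.Ico 1 (N+1) := by
      ext i; simp [Nat.lt_succ_iff]
    rw [this]
    linarith
  · intro j hj1 hjN
    have hsum : ∑ t ∈ Finset.range j, (u t j + v t j)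
        = ∑ t ∈ Finset.range j, (z t j - z (t+1) j) := by
      apply Finset.sum_congr rfl
      intro t ht
      simp only [Finset.mem_range] at ht
      have : z (t+1) j = z t j - u t j - v t j := hz t (by omega) j hj1 hjN
      rw [this]; ring
    rw [hsum, Finset.sum_range_sub' (fun t => z t j)]
    have hzjj : z j j = 0 := (hQ j hjN j hj1 hjN).2 le_rfl
    rw [hz0, hzjj]; ring
  · intro j hj1 hjN
    exact (hQ N le_rfl j hj1 hjN).2 hjN
end

section
/- Pathwise lower bound on firm usage: for every x ∈ ℝ₊^N, s ∈ ℝ₊^N and every feasible schedule (u, v) for (x, s), the firm usage satisfies Σ_{k=0}^{N−1} Σ_{j=1}^N v_k^j ≥ Σ_{k=1}^N max{0, −ξ_k(x, s)}. -/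
/-- A feasible schedule for demand `x` (classes `j = 1,…,N`, class `j` must be exactly
served by its deadline `j`) and supply `s` (periods `k = 0,…,N-1`): nonnegative
allocations `u_k^j` (intermittent) and `v_k^j` (firm) with `u_k^j = v_k^j = 0` whenever
`j ≤ k`, `Σ_{j=1}^N u_k^j ≤ s_k` for every `k`, and `Σ_{t=0}^{j-1} (u_t^j + v_t^j) = x_j`
for every `j`. -/
def FeasibleSchedule (N : ℕ) (x s : ℕ → ℝ) (u v : ℕ → ℕ → ℝ) : Prop :=
  (∀ k, k < N → ∀ j, 1 ≤ j → j ≤ N → 0 ≤ u k j ∧ 0 ≤ v k j) ∧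
  (∀ k, k < N → ∀ j, 1 ≤ j → j ≤ N → j ≤ k → u k j = 0 ∧ v k j = 0) ∧
  (∀ k, k < N → ∑ j ∈ Finset.Icc 1 N, u k j ≤ s k) ∧
  (∀ j, 1 ≤ j → j ≤ N → ∑ t ∈ Finset.range j, (u t j + v t j) = x j)

private lemma max_neg_aux (a : ℝ) : max 0 (-a) = max 0 a - a := by
  rcases le_total a 0 with h | h
  · rw [max_eq_right (by linarith), max_eq_left h]; ring
  · rw [max_eq_left (by linarith), max_eq_right h]; ring

private lemma resid_succ (x s : ℕ → ℝ) (m : ℕ) :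
    resid x s (m + 1) = max 0 (resid x s m) + s m - x (m + 1) := by
  simp [resid]

/-- Identity: `Σ_{k=1}^m D_k = X_m - S_m + max(0, ξ_m)`. -/
private lemma resid_sum_identity (x s : ℕ → ℝ) (m : ℕ) :
    ∑ k ∈ Finset.Icc 1 m, max 0 (-(resid x s k)) =
      ∑ j ∈ Finset.Icc 1 m, x j - ∑ k ∈ Finset.range m, s k + max 0 (resid x s m) := by
  induction m with
  | zero => simp [resid]
  | succ m ih =>
    rw [Finset.sum_Icc_succ_top (by omega : 1 ≤ m + 1),
        Finset.sum_Icc_succ_top (by omega : 1 ≤ m + 1),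
        Finset.sum_range_succ, ih]
    have h := resid_succ x s m
    have h2 := max_neg_aux (resid x s (m + 1))
    linarith

/-- Lindley-type bound: `max(0, ξ_m) + (X_m - S_m) ≤ X_t - S_t` for some `t ≤ m`. -/
private lemma resid_max_bound (x s : ℕ → ℝ) (m : ℕ) :
    ∃ t ≤ m, max 0 (resid x s m) +
        (∑ j ∈ Finset.Icc 1 m, x j - ∑ k ∈ Finset.range m, s k) ≤
      ∑ j ∈ Finset.Icc 1 t, x j - ∑ k ∈ Finset.range t, s k := by
  induction m with
  | zero => exact ⟨0, le_rfl, by simp [resid]⟩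
  | succ m ih =>
    obtain ⟨t, ht, iht⟩ := ih
    by_cases h : resid x s (m + 1) ≤ 0
    · exact ⟨m + 1, le_rfl, by rw [max_eq_left h]; linarith⟩
    · refine ⟨t, by omega, ?_⟩
      have h2 := resid_succ x s m
      rw [max_eq_right (by linarith : (0:ℝ) ≤ resid x s (m+1)),
          Finset.sum_Icc_succ_top (by omega : 1 ≤ m + 1), Finset.sum_range_succ, h2]
      have hm : (0:ℝ) ≤ max 0 (resid x s m) := le_max_left _ _
      linarith

/-- Prefix deficit bound: `X_t - S_t ≤ Σ v`. -/
private lemma prefix_deficit (N : ℕ) (x s : ℕ → ℝ)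
    (u v : ℕ → ℕ → ℝ) (hfeas : FeasibleSchedule N x s u v)
    (t : ℕ) (ht : t ≤ N) :
    ∑ j ∈ Finset.Icc 1 t, x j - ∑ k ∈ Finset.range t, s k ≤
      ∑ k ∈ Finset.range N, ∑ j ∈ Finset.Icc 1 N, v k j := by
  obtain ⟨hpos, hzero, hsup, hdem⟩ := hfeas
  have hnonneg : ∀ r ∈ Finset.range t, ∀ j ∈ Finset.Icc 1 N, 0 ≤ u r j + v r j := by
    intro r hr j hj
    simp only [Finset.mem_range] at hr
    simp only [Finset.mem_Icc] at hj
    have := hpos r (lt_of_lt_of_le hr ht) j hj.1 hj.2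
    linarith [this.1, this.2]
  have hX : ∑ j ∈ Finset.Icc 1 t, x j
      = ∑ j ∈ Finset.Icc 1 t, ∑ r ∈ Finset.range j, (u r j + v r j) := by
    refine Finset.sum_congr rfl fun j hj => ?_
    simp only [Finset.mem_Icc] at hj
    exact (hdem j hj.1 (hj.2.trans ht)).symm
  have step1 : ∑ j ∈ Finset.Icc 1 t, ∑ r ∈ Finset.range j, (u r j + v r j)
      ≤ ∑ j ∈ Finset.Icc 1 t, ∑ r ∈ Finset.range t, (u r j + v r j) := by
    refine Finset.sum_le_sum fun j hj => ?_
    simp only [Finset.mem_Icc] at hj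
    refine Finset.sum_le_sum_of_subset_of_nonneg
      (Finset.range_subset_range.2 hj.2) fun r hr _ => ?_
    exact hnonneg r hr j (Finset.mem_Icc.2 ⟨hj.1, hj.2.trans ht⟩)
  have step2 : ∑ j ∈ Finset.Icc 1 t, ∑ r ∈ Finset.range t, (u r j + v r j)
      ≤ ∑ j ∈ Finset.Icc 1 N, ∑ r ∈ Finset.range t, (u r j + v r j) := by
    refine Finset.sum_le_sum_of_subset_of_nonneg
      (Finset.Icc_subset_Icc_right ht) fun j hj _ => ?_
    exact Finset.sum_nonneg fun r hr => hnonneg r hr j hj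
  have hswap : ∑ j ∈ Finset.Icc 1 N, ∑ r ∈ Finset.range t, (u r j + v r j)
      = ∑ r ∈ Finset.range t, ∑ j ∈ Finset.Icc 1 N, (u r j + v r j) :=
    Finset.sum_comm
  have hsplit : ∀ r, ∑ j ∈ Finset.Icc 1 N, (u r j + v r j)
      = ∑ j ∈ Finset.Icc 1 N, u r j + ∑ j ∈ Finset.Icc 1 N, v r j := fun r =>
    Finset.sum_add_distrib
  have hu : ∑ r ∈ Finset.range t, ∑ j ∈ Finset.Icc 1 N, u r j
      ≤ ∑ r ∈ Finset.range t, s r := by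
    refine Finset.sum_le_sum fun r hr => ?_
    simp only [Finset.mem_range] at hr
    exact hsup r (lt_of_lt_of_le hr ht)
  have hv : ∑ r ∈ Finset.range t, ∑ j ∈ Finset.Icc 1 N, v r j
      ≤ ∑ r ∈ Finset.range N, ∑ j ∈ Finset.Icc 1 N, v r j := by
    refine Finset.sum_le_sum_of_subset_of_nonneg
      (Finset.range_subset_range.2 ht) fun r hr _ => ?_
    refine Finset.sum_nonneg fun j hj => ?_
    simp only [Finset.mem_range] at hr
    simp only [Finset.mem_Icc] at hj
    exact (hpos r hr j hj.1 hj.2).2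
  have hfinal : ∑ r ∈ Finset.range t, ∑ j ∈ Finset.Icc 1 N, (u r j + v r j)
      ≤ ∑ r ∈ Finset.range t, s r + ∑ r ∈ Finset.range N, ∑ j ∈ Finset.Icc 1 N, v r j := by
    calc ∑ r ∈ Finset.range t, ∑ j ∈ Finset.Icc 1 N, (u r j + v r j)
        = ∑ r ∈ Finset.range t, ∑ j ∈ Finset.Icc 1 N, u r j
          + ∑ r ∈ Finset.range t, ∑ j ∈ Finset.Icc 1 N, v r j := by
          simp only [hsplit]; exact Finset.sum_add_distrib
      _ ≤ _ := add_le_add hu hv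
  linarith [hX, step1, step2, hswap ▸ hfinal]

/-- Pathwise lower bound on firm usage: for every `x ∈ ℝ₊^N`, `s ∈ ℝ₊^N`
and every feasible schedule `(u, v)` for `(x, s)`, the firm usage satisfies
`Σ_{k=0}^{N-1} Σ_{j=1}^N v_k^j ≥ Σ_{k=1}^N max{0, -ξ_k(x, s)}`. -/
theorem firm_usage_lower_bound
    (N : ℕ) (hN : 1 ≤ N) (x s : ℕ → ℝ)
    (hx : ∀ j, 1 ≤ j → j ≤ N → 0 ≤ x j)
    (hs : ∀ k, k < N → 0 ≤ s k)
    (u v : ℕ → ℕ → ℝ)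
    (hfeas : FeasibleSchedule N x s u v) :
    ∑ k ∈ Finset.range N, ∑ j ∈ Finset.Icc 1 N, v k j ≥
      ∑ k ∈ Finset.Icc 1 N, max 0 (-(resid x s k)) := by
  rw [ge_iff_le, resid_sum_identity x s N]
  obtain ⟨t, ht, hbound⟩ := resid_max_bound x s N
  have hdef := prefix_deficit N x s u v hfeas t ht
  linarith
end

section
/- Pathwise convexity of the optimal firm-supply cost: for every fixed s ∈ ℝ₊^N, the function x ↦ Σ_{k=1}^N max{0, −ξ_k(x, s)} is convex on the nonnegative orthant ℝ₊^N. -/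
/-!
Since `max 0 (-a) = max 0 a - a`, the recursion makes the cost telescope:
`∑_{k=1}^n max 0 (-ξ_k) = max 0 ξ_n + ∑_{k<n} (x_{k+1} - s_k)`.
The second summand is affine in `x`, and `ξ_n` is convex in `x` by induction, being built from
convex functions by `max 0 ·` and adding affine terms; hence so is `max 0 ξ_n`.
-/

open Finset Set

theorem ConvexOn.finset_sum {𝕜 E β ι : Type*} [Semiring 𝕜] [PartialOrder 𝕜]
    [AddCommMonoid E] [AddCommMonoid β] [PartialOrder β] [IsOrderedAddMonoid β] [SMul 𝕜 E]
    [Module 𝕜 β] {s : Set E} (hs : Convex 𝕜 s) (t : Finset ι) {f : ι → E → β}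
    (hf : ∀ i ∈ t, ConvexOn 𝕜 s (f i)) : ConvexOn 𝕜 s fun x => ∑ i ∈ t, f i x := by
  classical
  induction t using Finset.induction_on with
  | empty => simpa using convexOn_const 0 hs
  | insert i t hi ih =>
    simp_rw [sum_insert hi]
    exact (hf i (mem_insert_self i t)).add (ih fun j hj => hf j (mem_insert_of_mem hj))

theorem convexOn_resid (s : ℕ → ℝ) : ∀ n, ConvexOn ℝ univ fun x => resid x s n
  | 0 => convexOn_const 0 convex_univ
  | n + 1 =>
    (((convexOn_const 0 convex_univ).sup (convexOn_resid s n)).add_const (s n)).sub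
      ((LinearMap.proj (n + 1)).concaveOn convex_univ)

theorem sum_max_zero_neg_resid (x s : ℕ → ℝ) (n : ℕ) :
    ∑ k ∈ Icc 1 n, max 0 (-resid x s k) =
      max 0 (resid x s n) + ∑ k ∈ range n, (x (k + 1) - s k) := by
  induction n with
  | zero => simp [resid]
  | succ n ih =>
    have hξ : resid x s (n + 1) = max 0 (resid x s n) + s n - x (n + 1) := rfl
    have hpart := max_zero_sub_max_neg_zero_eq_self (resid x s (n + 1))
    rw [max_comm, max_comm (-_)] at hpart
    rw [sum_Icc_succ_top (by omega), ih, sum_range_succ]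
    linarith

theorem optimal_firm_cost_convexOn_general
    (N : ℕ) (s : ℕ → ℝ) :
    ConvexOn ℝ {x : ℕ → ℝ | ∀ j, 1 ≤ j → j ≤ N → 0 ≤ x j}
      (fun x => ∑ k ∈ Finset.Icc 1 N, max 0 (-(resid x s k))) := by
  have horthant : Convex ℝ {x : ℕ → ℝ | ∀ j, 1 ≤ j → j ≤ N → 0 ≤ x j} := by
    intro x hx y hy a b ha hb _ j hj hjN
    have := hx j hj hjN
    have := hy j hj hjN
    simp only [Pi.add_apply, Pi.smul_apply, smul_eq_mul]
    positivity
  have haffine : ConvexOn ℝ univ fun x : ℕ → ℝ => ∑ k ∈ range N, (x (k + 1) - s k) :=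
    ConvexOn.finset_sum convex_univ _ fun k _ =>
      ((LinearMap.proj (k + 1)).convexOn convex_univ).sub (concaveOn_const (s k) convex_univ)
  simp_rw [sum_max_zero_neg_resid]
  exact (((convexOn_const 0 convex_univ).sup (convexOn_resid s N)).add haffine).subset
    (subset_univ _) horthant

/-- Pathwise convexity of the optimal firm-supply cost: for every fixed
`s ∈ ℝ₊^N`, the function `x ↦ Σ_{k=1}^N max{0, -ξ_k(x, s)}` is convex on the nonnegative
orthant `ℝ₊^N` (demand vectors with nonnegative coordinates `x_1, …, x_N`). -/
theorem optimal_firm_cost_convexOn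
    (N : ℕ) (hN : 1 ≤ N) (s : ℕ → ℝ) (hs : ∀ k, k < N → 0 ≤ s k) :
    ConvexOn ℝ {x : ℕ → ℝ | ∀ j, 1 ≤ j → j ≤ N → 0 ≤ x j}
      (fun x => ∑ k ∈ Finset.Icc 1 N, max 0 (-(resid x s k))) :=
  optimal_firm_cost_convexOn_general N s
end

section
/- Pointwise derivative formula for the negative part of the residual: fix s ∈ ℝ^N, x ∈ ℝ^N and indices 1 ≤ k ≤ ℓ ≤ N, and suppose ξ_t(x, s) ≠ 0 for every t ∈ {k, …, ℓ}. Then the function g(y) = max{0, −ξ_ℓ(x[k ↦ y], s)} is differentiable at y = x_k with derivative g′(x_k) = 1{ξ_ℓ(x,s) < 0} · Π_{t=k}^{ℓ−1} 1{ξ_t(x,s) > 0} (the empty product for ℓ = k equals 1). -/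
open Filter Topology

theorem HasDerivAt.max_zero_of_ne {f : ℝ → ℝ} {f' a : ℝ} (hf : HasDerivAt f f' a)
    (ha : f a ≠ 0) :
    HasDerivAt (fun y => max 0 (f y)) (if 0 < f a then f' else 0) a := by
  rcases ha.lt_or_gt with hneg | hpos
  · have hev : ∀ᶠ y in 𝓝 a, f y < 0 := hf.continuousAt.eventually (eventually_lt_nhds hneg)
    rw [if_neg hneg.not_gt]
    refine (hasDerivAt_const a 0).congr_of_eventuallyEq ?_
    filter_upwards [hev] with y hy using max_eq_left hy.le
  · have hev : ∀ᶠ y in 𝓝 a, 0 < f y := hf.continuousAt.eventually (eventually_gt_nhds hpos)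
    rw [if_pos hpos]
    refine hf.congr_of_eventuallyEq ?_
    filter_upwards [hev] with y hy using max_eq_right hy.le

theorem resid_update_of_lt (x s : ℕ → ℝ) {k t : ℕ} (y : ℝ) (ht : t < k) :
    resid (Function.update x k y) s t = resid x s t := by
  induction t with
  | zero => rfl
  | succ t ih =>
    simp only [resid, ih (by omega), Function.update_of_ne ht.ne]

theorem resid_update_self (x s : ℕ → ℝ) (k : ℕ) (y : ℝ) :
    resid (Function.update x (k + 1) y) s (k + 1) = max 0 (resid x s k) + s k - y := by
  rw [resid, resid_update_of_lt x s y k.lt_succ_self, Function.update_self]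

theorem resid_update_succ_of_ne (x s : ℕ → ℝ) {k t : ℕ} (y : ℝ) (ht : t + 1 ≠ k) :
    resid (Function.update x k y) s (t + 1)
      = max 0 (resid (Function.update x k y) s t) + s t - x (t + 1) := by
  rw [resid, Function.update_of_ne ht]

theorem resid_update_hasDerivAt (x s : ℕ → ℝ) {k l : ℕ} (hk : 1 ≤ k) (hkl : k ≤ l)
    (hne : ∀ t ∈ Finset.Ico k l, resid x s t ≠ 0) :
    HasDerivAt (fun y => resid (Function.update x k y) s l)
      (-∏ t ∈ Finset.Ico k l, if 0 < resid x s t then (1 : ℝ) else 0) (x k) := by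
  induction l, hkl using Nat.le_induction with
  | base =>
    obtain ⟨m, rfl⟩ := Nat.exists_eq_add_of_le' hk
    simp only [resid_update_self, Finset.Ico_self, Finset.prod_empty]
    exact (hasDerivAt_id _).const_sub _
  | succ l hkl ih =>
    have hR := ih fun t ht => hne t (Finset.Ico_subset_Ico_right l.le_succ ht)
    have hl : resid (Function.update x k (x k)) s l ≠ 0 := by
      simpa using hne l (by simp [hkl])
    simp only [resid_update_succ_of_ne x s _ (show l + 1 ≠ k by omega)]
    refine (((hR.max_zero_of_ne hl).add_const (s l)).sub_const (x (l + 1))).congr_deriv ?_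
    rw [Finset.prod_Ico_succ_top hkl, Function.update_eq_self]
    split_ifs <;> simp

theorem resid_neg_part_hasDerivAt_general
    (x s : ℕ → ℝ)
    (k l : ℕ) (hk : 1 ≤ k) (hkl : k ≤ l)
    (hne : ∀ t, k ≤ t → t ≤ l → resid x s t ≠ 0) :
    HasDerivAt (fun y : ℝ => max 0 (-(resid (Function.update x k y) s l)))
      ((if resid x s l < 0 then (1 : ℝ) else 0) *
        ∏ t ∈ Finset.Ico k l, (if 0 < resid x s t then (1 : ℝ) else 0))
      (x k) := by
  have hR := resid_update_hasDerivAt x s hk hkl fun t ht =>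
    hne t (Finset.mem_Ico.1 ht).1 (Finset.mem_Ico.1 ht).2.le
  have hl : -resid (Function.update x k (x k)) s l ≠ 0 := by
    simpa using hne l hkl le_rfl
  refine (hR.neg.max_zero_of_ne hl).congr_deriv ?_
  simp only [Pi.neg_apply, Function.update_eq_self, neg_pos, neg_neg]
  split_ifs <;> simp

/-- Pointwise derivative formula for the negative part of the residual:
fix `s`, `x` and indices `1 ≤ k ≤ ℓ ≤ N`, and suppose `ξ_t(x, s) ≠ 0` for every
`t ∈ {k, …, ℓ}`.  Then `g(y) = max{0, -ξ_ℓ(x[k ↦ y], s)}` is differentiable at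
`y = x_k` with derivative
`g′(x_k) = 1{ξ_ℓ(x,s) < 0} · Π_{t=k}^{ℓ-1} 1{ξ_t(x,s) > 0}`
(the empty product for `ℓ = k` equals `1`). -/
theorem resid_neg_part_hasDerivAt
    (N : ℕ) (hN : 1 ≤ N) (x s : ℕ → ℝ)
    (k l : ℕ) (hk : 1 ≤ k) (hkl : k ≤ l) (hlN : l ≤ N)
    (hne : ∀ t, k ≤ t → t ≤ l → resid x s t ≠ 0) :
    HasDerivAt (fun y : ℝ => max 0 (-(resid (Function.update x k y) s l)))
      ((if resid x s l < 0 then (1 : ℝ) else 0) *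
        ∏ t ∈ Finset.Ico k l, (if 0 < resid x s t then (1 : ℝ) else 0))
      (x k) :=
  resid_neg_part_hasDerivAt_general x s k l hk hkl hne
end

section
/- Price monotonicity in the deadline: for every x ∈ ℝ₊^N, the marginal cost prices satisfy c_0 ≥ ζ_1(x) ≥ ζ_2(x) ≥ ⋯ ≥ ζ_N(x) ≥ 0. -/
/-!
The summands of `ζ_k / c_0` are the probabilities of the disjoint events "the residual process,
watched from time `k`, is first nonpositive at time `t`", for `t = k, …, max k N`. Their union is
the event that the process is nonpositive at some time in `[k, max k N]`, so
`ζ_k = c_0 P(∃ t ∈ [k, max k N], ξ_t ≤ 0)`. This lies in `[0, c_0]`, and for `k < N` the event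
only shrinks when `k` is replaced by `k + 1`.
-/

open MeasureTheory

/-- The marginal cost price menu
`ζ_k(x) = c_0 [ P(ξ_k ≤ 0) + Σ_{t=k+1}^N P(ξ_k > 0, …, ξ_{t-1} > 0, ξ_t ≤ 0) ]`. -/
noncomputable def zetaPrice (N : ℕ) {Ω : Type*} [MeasurableSpace Ω] (P : Measure Ω)
    (s : Ω → ℕ → ℝ) (c0 : ℝ) (x : ℕ → ℝ) (k : ℕ) : ℝ :=
  c0 * ((P {ω | resid x (s ω) k ≤ 0}).toReal +
    ∑ t ∈ Finset.Icc (k + 1) N,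
      (P {ω | (∀ j, k ≤ j → j < t → 0 < resid x (s ω) j) ∧
        resid x (s ω) t ≤ 0}).toReal)

open Finset

section FirstNonpos

variable {Ω : Type*} (X : ℕ → Ω → ℝ)

def firstNonposAt (k t : ℕ) : Set Ω :=
  {ω | (∀ j, k ≤ j → j < t → 0 < X j ω) ∧ X t ω ≤ 0}

theorem firstNonposAt_self (k : ℕ) : firstNonposAt X k k = {ω | X k ω ≤ 0} := by
  ext ω
  simp only [firstNonposAt, Set.mem_ofPred_eq, and_iff_right_iff_imp]
  intro _ j hkj hjk
  omega

theorem pairwiseDisjoint_firstNonposAt (k : ℕ) :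
    (Set.Ici k).PairwiseDisjoint (firstNonposAt X k) := by
  have key : ∀ t₁ t₂, k ≤ t₁ → t₁ < t₂ →
      Disjoint (firstNonposAt X k t₁) (firstNonposAt X k t₂) :=
    fun t₁ t₂ hk hlt => Set.disjoint_left.2 fun _ h₁ h₂ => (h₂.1 t₁ hk hlt).not_ge h₁.2
  intro t₁ h₁ t₂ h₂ hne
  rcases hne.lt_or_gt with hlt | hlt
  · exact key t₁ t₂ h₁ hlt
  · exact (key t₂ t₁ h₂ hlt).symm

theorem biUnion_firstNonposAt (k n : ℕ) :
    ⋃ t ∈ Icc k n, firstNonposAt X k t = {ω | ∃ t ∈ Icc k n, X t ω ≤ 0} := by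
  ext ω
  simp only [Set.mem_iUnion, Set.mem_ofPred_eq, exists_prop]
  constructor
  · rintro ⟨t, ht, -, hXt⟩
    exact ⟨t, ht, hXt⟩
  · rintro ⟨t, ht, hXt⟩
    classical
    -- the first time `≥ k` at which `X · ω` is nonpositive
    have hex : ∃ u, k ≤ u ∧ X u ω ≤ 0 := ⟨t, (mem_Icc.1 ht).1, hXt⟩
    obtain ⟨hk, hXfirst⟩ := Nat.find_spec hex
    have hle : Nat.find hex ≤ t := Nat.find_min' hex ⟨(mem_Icc.1 ht).1, hXt⟩
    refine ⟨Nat.find hex, mem_Icc.2 ⟨hk, hle.trans (mem_Icc.1 ht).2⟩, fun j hkj hj => ?_, hXfirst⟩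
    exact lt_of_not_ge fun hXj => Nat.find_min hex hj ⟨hkj, hXj⟩

variable [MeasurableSpace Ω] {X}

theorem measurableSet_firstNonposAt (hX : ∀ n, Measurable (X n)) (k t : ℕ) :
    MeasurableSet (firstNonposAt X k t) := by
  simp only [firstNonposAt, Set.ofPred_and, Set.ofPred_forall]
  refine MeasurableSet.inter ?_ (measurableSet_le (hX t) measurable_const)
  exact .iInter fun j => .iInter fun _ => .iInter fun _ => measurableSet_lt measurable_const (hX j)

end FirstNonpos

theorem measurable_resid {Ω : Type*} [MeasurableSpace Ω] {s : Ω → ℕ → ℝ} (hs : Measurable s)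
    (x : ℕ → ℝ) (n : ℕ) : Measurable fun ω => resid x (s ω) n := by
  induction n with
  | zero => exact measurable_const
  | succ k ih =>
    exact ((measurable_const.max ih).add ((measurable_pi_apply k).comp hs)).sub measurable_const

theorem sum_Icc_max_eq_add_sum_Icc_succ {M : Type*} [AddCommMonoid M] (f : ℕ → M) (k N : ℕ) :
    ∑ t ∈ Icc k (max k N), f t = f k + ∑ t ∈ Icc (k + 1) N, f t := by
  have : Icc k (max k N) = insert k (Icc (k + 1) N) := by
    ext t
    simp only [mem_Icc, mem_insert]
    omega
  rw [this, sum_insert (by simp)]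

theorem zetaPrice_eq_mul_measureReal {Ω : Type*} [MeasurableSpace Ω] (P : Measure Ω)
    [IsFiniteMeasure P] {s : Ω → ℕ → ℝ} (hs : Measurable s) (N : ℕ) (c0 : ℝ) (x : ℕ → ℝ)
    (k : ℕ) : zetaPrice N P s c0 x k =
      c0 * P.real {ω | ∃ t ∈ Icc k (max k N), resid x (s ω) t ≤ 0} := by
  set X : ℕ → Ω → ℝ := fun n ω => resid x (s ω) n
  calc zetaPrice N P s c0 x k
      = c0 * (P.real (firstNonposAt X k k) +
          ∑ t ∈ Icc (k + 1) N, P.real (firstNonposAt X k t)) := by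
        rw [firstNonposAt_self]; rfl
    _ = c0 * P.real (⋃ t ∈ Icc k (max k N), firstNonposAt X k t) := by
        rw [measureReal_biUnion_finset
          ((pairwiseDisjoint_firstNonposAt X k).subset fun t ht => (mem_Icc.1 ht).1)
          fun t _ => measurableSet_firstNonposAt (measurable_resid hs x) k t,
          sum_Icc_max_eq_add_sum_Icc_succ]
    _ = c0 * P.real {ω | ∃ t ∈ Icc k (max k N), resid x (s ω) t ≤ 0} := by
        rw [biUnion_firstNonposAt]

theorem zeta_price_monotone_general
    (N : ℕ)
    {Ω : Type*} [MeasurableSpace Ω] (P : Measure Ω) [IsProbabilityMeasure P]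
    (s : Ω → ℕ → ℝ) (hmeas : Measurable s)
    (x : ℕ → ℝ)
    (c0 : ℝ) (hc0 : 0 < c0) :
    zetaPrice N P s c0 x 1 ≤ c0 ∧
    (∀ k, 1 ≤ k → k < N → zetaPrice N P s c0 x (k + 1) ≤ zetaPrice N P s c0 x k) ∧
    0 ≤ zetaPrice N P s c0 x N := by
  simp only [zetaPrice_eq_mul_measureReal P hmeas]
  refine ⟨mul_le_of_le_one_right hc0.le measureReal_le_one, fun k _ hkN => ?_,
    mul_nonneg hc0.le measureReal_nonneg⟩
  rw [max_eq_right hkN.le, max_eq_right hkN]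
  refine mul_le_mul_of_nonneg_left (measureReal_mono ?_) hc0.le
  rintro ω ⟨t, ht, hneg⟩
  exact ⟨t, Icc_subset_Icc_left k.le_succ ht, hneg⟩

/-- Price monotonicity in the deadline: for every `x ∈ ℝ₊^N`, the
marginal cost prices satisfy `c_0 ≥ ζ_1(x) ≥ ζ_2(x) ≥ ⋯ ≥ ζ_N(x) ≥ 0`. -/
theorem zeta_price_monotone
    (N : ℕ) (hN : 1 ≤ N)
    {Ω : Type*} [MeasurableSpace Ω] (P : Measure Ω) [IsProbabilityMeasure P]
    (s : Ω → ℕ → ℝ) (hmeas : Measurable s)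
    (hs : ∀ ω, ∀ j, j < N → 0 ≤ s ω j)
    (x : ℕ → ℝ) (hx : ∀ j, 1 ≤ j → j ≤ N → 0 ≤ x j)
    (c0 : ℝ) (hc0 : 0 < c0) :
    zetaPrice N P s c0 x 1 ≤ c0 ∧
    (∀ k, 1 ≤ k → k < N → zetaPrice N P s c0 x (k + 1) ≤ zetaPrice N P s c0 x k) ∧
    0 ≤ zetaPrice N P s c0 x N :=
  zeta_price_monotone_general N P s hmeas x c0 hc0
end

section
/- Per-deadline incentive inequality (inequality (sh22)): fix k ∈ {1,…,N}, suppose R ≥ c_0 > 0, and define the partition events η_k = {ξ_k ≤ 0}, η_t = {ξ_k > 0, …, ξ_{t−1} > 0, ξ_t ≤ 0} for t = k+1, …, N−1, and η_N = {ξ_k > 0, …, ξ_{N−1} > 0}. Then for every t ∈ {k+1, …, N}: R · Σ_{m=t}^N P(η_m) − ζ_t(x) ≤ R − ζ_k(x). -/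
open MeasureTheory

/-- The events `η_k = {ξ_k ≤ 0}`, `η_t = {ξ_k > 0, …, ξ_{t-1} > 0, ξ_t ≤ 0}` for
`t = k+1, …, N-1`, and `η_N = {ξ_k > 0, …, ξ_{N-1} > 0}`. -/
def etaEvent (N : ℕ) {Ω : Type*} (x : ℕ → ℝ) (s : Ω → ℕ → ℝ) (k t : ℕ) : Set Ω :=
  if t = N then {ω | ∀ j, k ≤ j → j < N → 0 < resid x (s ω) j}
  else {ω | (∀ j, k ≤ j → j < t → 0 < resid x (s ω) j) ∧ resid x (s ω) t ≤ 0}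

section Aux

variable {Ω : Type*} [MeasurableSpace Ω]

lemma meas_resid (x : ℕ → ℝ) (s : Ω → ℕ → ℝ) (hmeas : Measurable s) (j : ℕ) :
    Measurable (fun ω => resid x (s ω) j) := by
  induction j with
  | zero => simpa [resid] using measurable_const
  | succ n ih =>
      have hsn : Measurable (fun ω => s ω n) := (measurable_pi_apply n).comp hmeas
      have : Measurable (fun ω => max 0 (resid x (s ω) n) + s ω n - x (n + 1)) :=
        ((measurable_const.max ih).add hsn).sub measurable_const
      simpa [resid] using this

lemma meas_cond (x : ℕ → ℝ) (s : Ω → ℕ → ℝ) (hmeas : Measurable s) (k t : ℕ) :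
    MeasurableSet {ω : Ω | ∀ j, k ≤ j → j < t → 0 < resid x (s ω) j} := by
  have heq : {ω : Ω | ∀ j, k ≤ j → j < t → 0 < resid x (s ω) j}
      = ⋂ j, {ω : Ω | k ≤ j → j < t → 0 < resid x (s ω) j} := by
    ext ω; simp
  rw [heq]
  refine MeasurableSet.iInter fun j => ?_
  by_cases h1 : k ≤ j
  · by_cases h2 : j < t
    · have : {ω : Ω | k ≤ j → j < t → 0 < resid x (s ω) j}
          = {ω : Ω | 0 < resid x (s ω) j} := by ext ω; simp [h1, h2]
      rw [this]
      exact measurableSet_lt measurable_const (meas_resid x s hmeas j)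
    · have : {ω : Ω | k ≤ j → j < t → 0 < resid x (s ω) j} = Set.univ := by
        ext ω; simp [h2]
      rw [this]; exact MeasurableSet.univ
  · have : {ω : Ω | k ≤ j → j < t → 0 < resid x (s ω) j} = Set.univ := by
      ext ω; simp [h1]
    rw [this]; exact MeasurableSet.univ

lemma meas_E (x : ℕ → ℝ) (s : Ω → ℕ → ℝ) (hmeas : Measurable s) (k t : ℕ) :
    MeasurableSet {ω : Ω | (∀ j, k ≤ j → j < t → 0 < resid x (s ω) j) ∧
      resid x (s ω) t ≤ 0} := by
  have : {ω : Ω | (∀ j, k ≤ j → j < t → 0 < resid x (s ω) j) ∧ resid x (s ω) t ≤ 0}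
      = {ω : Ω | ∀ j, k ≤ j → j < t → 0 < resid x (s ω) j} ∩
        {ω : Ω | resid x (s ω) t ≤ 0} := rfl
  rw [this]
  exact (meas_cond x s hmeas k t).inter
    (measurableSet_le (meas_resid x s hmeas t) measurable_const)

lemma meas_eta (N : ℕ) (x : ℕ → ℝ) (s : Ω → ℕ → ℝ) (hmeas : Measurable s) (k t : ℕ) :
    MeasurableSet (etaEvent N x s k t) := by
  unfold etaEvent
  split
  · exact meas_cond x s hmeas k N
  · exact meas_E x s hmeas k t

lemma eta_disj (N : ℕ) (x : ℕ → ℝ) (s : Ω → ℕ → ℝ) {k m m' : ℕ}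
    (hkm : k ≤ m) (hmm' : m < m') (hm' : m' ≤ N) :
    Disjoint (etaEvent N x s k m) (etaEvent N x s k m') := by
  rw [Set.disjoint_left]
  intro ω h1 h2
  have hmN : m ≠ N := by omega
  unfold etaEvent at h1 h2
  rw [if_neg hmN] at h1
  have hpos : 0 < resid x (s ω) m := by
    by_cases h : m' = N
    · rw [if_pos h] at h2
      exact h2 m hkm (by omega)
    · rw [if_neg h] at h2
      exact h2.1 m hkm hmm'
  exact absurd h1.2 (not_le.mpr hpos)

lemma zeta_eq (N : ℕ) (P : Measure Ω) (s : Ω → ℕ → ℝ) (c0 : ℝ) (x : ℕ → ℝ)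
    (k : ℕ) (hkN : k ≤ N) :
    zetaPrice N P s c0 x k = c0 * ∑ m ∈ Finset.Icc k N,
      (P {ω | (∀ j, k ≤ j → j < m → 0 < resid x (s ω) j) ∧
        resid x (s ω) m ≤ 0}).toReal := by
  unfold zetaPrice
  congr 1
  have hins : Finset.Icc k N = insert k (Finset.Icc (k + 1) N) := by
    ext m; simp only [Finset.mem_Icc, Finset.mem_insert]; omega
  rw [hins, Finset.sum_insert (by simp [Finset.mem_Icc])]
  have hset : {ω : Ω | (∀ j, k ≤ j → j < k → 0 < resid x (s ω) j) ∧
      resid x (s ω) k ≤ 0} = {ω : Ω | resid x (s ω) k ≤ 0} := by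
    ext ω
    simp only [Set.mem_setOf_eq]
    exact ⟨fun h => h.2, fun h => ⟨fun j h1 h2 => absurd (h1.trans_lt h2) (lt_irrefl k), h⟩⟩
  rw [hset]

end Aux

/-- Per-deadline incentive inequality (inequality (sh22)): fix
`k ∈ {1,…,N}`, suppose `R ≥ c_0 > 0`.  Then for every `t ∈ {k+1, …, N}`:
`R · Σ_{m=t}^N P(η_m) − ζ_t(x) ≤ R − ζ_k(x)`. -/
theorem per_deadline_incentive_inequality
    (N : ℕ) (hN : 1 ≤ N)
    {Ω : Type*} [MeasurableSpace Ω] (P : Measure Ω) [IsProbabilityMeasure P]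
    (s : Ω → ℕ → ℝ) (hmeas : Measurable s)
    (hs : ∀ ω, ∀ j, j < N → 0 ≤ s ω j)
    (x : ℕ → ℝ) (hx : ∀ j, 1 ≤ j → j ≤ N → 0 ≤ x j)
    (c0 R : ℝ) (hc0 : 0 < c0) (hR : c0 ≤ R)
    (k : ℕ) (hk : 1 ≤ k) (hkN : k ≤ N) :
    ∀ t, k + 1 ≤ t → t ≤ N →
      R * ∑ m ∈ Finset.Icc t N, (P (etaEvent N x s k m)).toReal -
          zetaPrice N P s c0 x t ≤
        R - zetaPrice N P s c0 x k := by
  intro t ht1 ht2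
  have hR0 : (0 : ℝ) ≤ R := hc0.le.trans hR
  set E : ℕ → ℕ → Set Ω := fun a m =>
    {ω | (∀ j, a ≤ j → j < m → 0 < resid x (s ω) j) ∧ resid x (s ω) m ≤ 0} with hE
  -- split of Icc k N
  have hsplit : Finset.Icc k N = Finset.Icc k (t - 1) ∪ Finset.Icc t N := by
    ext m; simp only [Finset.mem_Icc, Finset.mem_union]; omega
  have hdisjI : Disjoint (Finset.Icc k (t - 1)) (Finset.Icc t N) := by
    rw [Finset.disjoint_left]
    intro m hm hm'
    simp only [Finset.mem_Icc] at hm hm'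
    omega
  set A : ℝ := ∑ m ∈ Finset.Icc k (t - 1), (P (etaEvent N x s k m)).toReal with hA
  set S : ℝ := ∑ m ∈ Finset.Icc t N, (P (etaEvent N x s k m)).toReal with hS
  have hAnn : 0 ≤ A := Finset.sum_nonneg fun m _ => ENNReal.toReal_nonneg
  -- (b) : A + S ≤ 1
  have hAS : A + S ≤ 1 := by
    have hAScomb : A + S = ∑ m ∈ Finset.Icc k N, (P (etaEvent N x s k m)).toReal := by
      rw [hsplit, Finset.sum_union hdisjI]
    rw [hAScomb]
    have hsum : ∑ m ∈ Finset.Icc k N, P (etaEvent N x s k m)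
        = P (⋃ m ∈ Finset.Icc k N, etaEvent N x s k m) := by
      refine (measure_biUnion_finset ?_ ?_).symm
      · intro m hm m' hm' hne
        simp only [Finset.coe_Icc, Set.mem_Icc] at hm hm'
        rcases lt_or_gt_of_ne hne with h | h
        · exact eta_disj N x s hm.1 h hm'.2
        · exact (eta_disj N x s hm'.1 h hm.2).symm
      · exact fun m _ => meas_eta N x s hmeas k m
    have htr : (∑ m ∈ Finset.Icc k N, P (etaEvent N x s k m)).toReal
        = ∑ m ∈ Finset.Icc k N, (P (etaEvent N x s k m)).toReal :=
      ENNReal.toReal_sum fun m _ => measure_ne_top P _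
    rw [← htr, hsum]
    have := measure_mono (Set.subset_univ (⋃ m ∈ Finset.Icc k N, etaEvent N x s k m)) (μ := P)
    calc (P (⋃ m ∈ Finset.Icc k N, etaEvent N x s k m)).toReal
        ≤ (P Set.univ).toReal := ENNReal.toReal_mono (by simp) this
      _ = 1 := by simp
  -- (a) : ζ_k ≤ c0 * A + ζ_t
  have hzeta : zetaPrice N P s c0 x k ≤ c0 * A + zetaPrice N P s c0 x t := by
    rw [zeta_eq N P s c0 x k hkN, zeta_eq N P s c0 x t ht2]
    rw [hsplit, Finset.sum_union hdisjI, mul_add]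
    gcongr ?_ + ?_
    · -- terms over Icc k (t-1): equal to etaEvent
      apply le_of_eq
      rw [hA]
      congr 1
      refine Finset.sum_congr rfl fun m hm => ?_
      simp only [Finset.mem_Icc] at hm
      have hmN : m ≠ N := by omega
      unfold etaEvent
      rw [if_neg hmN]
    · -- terms over Icc t N : E k m ⊆ E t m
      have hmono : ∀ m ∈ Finset.Icc t N, (P (E k m)).toReal ≤ (P (E t m)).toReal := by
        intro m hm
        simp only [Finset.mem_Icc] at hm
        have hsub : E k m ⊆ E t m := by
          intro ω hω
          exact ⟨fun j hj1 hj2 => hω.1 j (le_trans (by omega) hj1) hj2, hω.2⟩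
        exact ENNReal.toReal_mono (measure_ne_top P _) (measure_mono hsub)
      have := Finset.sum_le_sum hmono
      exact mul_le_mul_of_nonneg_left this hc0.le
  -- combine
  nlinarith [mul_le_mul_of_nonneg_left hAS hR0, mul_le_mul_of_nonneg_right hR hAnn]
end

section
/- Main incentive-compatibility inequality (inequality (sh20)): fix k ∈ {1,…,N}, suppose R ≥ c_0 > 0, let q ≥ 0, and let ã_k, …, ã_N ≥ 0 satisfy Σ_{t=k}^N ã_t ≤ q. With the partition events η_k = {ξ_k ≤ 0}, η_t = {ξ_k > 0, …, ξ_{t−1} > 0, ξ_t ≤ 0} for t = k+1, …, N−1, and η_N = {ξ_k > 0, …, ξ_{N−1} > 0}, it holds that R · Σ_{t=k}^N P(η_t) · ( q − Σ_{τ=k}^t ã_τ ) ≥ (q − ã_k) · ζ_k(x) − Σ_{t=k+1}^N ζ_t(x) · ã_t. -/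
open MeasureTheory

namespace ICAux

variable {Ω : Type*} [MeasurableSpace Ω]

/-- "hit at `t`, survived from `a`". -/
def hitE (x : ℕ → ℝ) (s : Ω → ℕ → ℝ) (a t : ℕ) : Set Ω :=
  {ω | (∀ j, a ≤ j → j < t → 0 < resid x (s ω) j) ∧ resid x (s ω) t ≤ 0}

/-- "survived from `a` up to (strictly before) `t`". -/
def surv (x : ℕ → ℝ) (s : Ω → ℕ → ℝ) (a t : ℕ) : Set Ω :=
  {ω | ∀ j, a ≤ j → j < t → 0 < resid x (s ω) j}

/-- "hit somewhere in `[a, N]`". -/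
def hitB (x : ℕ → ℝ) (s : Ω → ℕ → ℝ) (a N : ℕ) : Set Ω :=
  {ω | ∃ t, a ≤ t ∧ t ≤ N ∧ resid x (s ω) t ≤ 0}

lemma meas_resid {x : ℕ → ℝ} {s : Ω → ℕ → ℝ} (hmeas : Measurable s) (j : ℕ) :
    Measurable fun ω => resid x (s ω) j := by
  induction j with
  | zero =>
      have : (fun ω : Ω => resid x (s ω) 0) = fun _ => (0 : ℝ) := rfl
      rw [this]; exact measurable_const
  | succ n ih =>
      have hsn : Measurable fun ω => s ω n := (measurable_pi_apply n).comp hmeas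
      have : (fun ω : Ω => resid x (s ω) (n + 1))
          = fun ω => max 0 (resid x (s ω) n) + s ω n - x (n + 1) := rfl
      rw [this]
      exact ((measurable_const.max ih).add hsn).sub measurable_const

lemma meas_surv {x : ℕ → ℝ} {s : Ω → ℕ → ℝ} (hmeas : Measurable s) (a t : ℕ) :
    MeasurableSet (surv x s a t) := by
  have h : surv x s a t
      = ⋂ j, ⋂ (_ : a ≤ j), ⋂ (_ : j < t), {ω | 0 < resid x (s ω) j} := by
    ext ω; simp [surv]
  rw [h]
  exact MeasurableSet.iInter fun j => MeasurableSet.iInter fun _ =>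
    MeasurableSet.iInter fun _ => measurableSet_lt measurable_const (meas_resid hmeas j)

lemma meas_hitE {x : ℕ → ℝ} {s : Ω → ℕ → ℝ} (hmeas : Measurable s) (a t : ℕ) :
    MeasurableSet (hitE x s a t) := by
  have h : hitE x s a t = surv x s a t ∩ {ω | resid x (s ω) t ≤ 0} := rfl
  rw [h]
  exact (meas_surv hmeas a t).inter
    (measurableSet_le (meas_resid hmeas t) measurable_const)

lemma meas_eta {x : ℕ → ℝ} {s : Ω → ℕ → ℝ} (hmeas : Measurable s) (N k t : ℕ) :
    MeasurableSet (etaEvent N x s k t) := by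
  rw [etaEvent]
  split_ifs with h
  · exact meas_surv hmeas k N
  · exact meas_hitE hmeas k t

lemma first_hit (x r : ℕ → ℝ) (a : ℕ) :
    ∀ t, a ≤ t → resid x r t ≤ 0 →
      ∃ t', a ≤ t' ∧ t' ≤ t ∧ (∀ j, a ≤ j → j < t' → 0 < resid x r j) ∧
        resid x r t' ≤ 0 := by
  intro t
  induction t using Nat.strong_induction_on with
  | _ t ih =>
    intro hat hle
    by_cases h : ∀ j, a ≤ j → j < t → 0 < resid x r j
    · exact ⟨t, hat, le_rfl, h, hle⟩
    · push_neg at h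
      obtain ⟨j, haj, hjt, hj⟩ := h
      obtain ⟨t', h1, h2, h3, h4⟩ := ih j hjt haj hj
      exact ⟨t', h1, h2.trans hjt.le, h3, h4⟩

lemma surv_self (x : ℕ → ℝ) (s : Ω → ℕ → ℝ) (k : ℕ) : surv x s k k = Set.univ := by
  ext ω
  simp only [surv, Set.mem_setOf_eq, Set.mem_univ, iff_true]
  intro j h1 h2
  omega

lemma eta_union (N : ℕ) (x : ℕ → ℝ) (s : Ω → ℕ → ℝ) (k τ : ℕ)
    (hkτ : k ≤ τ) (hτN : τ ≤ N) :
    ⋃ t ∈ Finset.Icc τ N, etaEvent N x s k t = surv x s k τ := by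
  ext ω
  simp only [Set.mem_iUnion, Finset.mem_Icc, exists_prop]
  constructor
  · rintro ⟨t, ⟨hτt, htN⟩, hmem⟩
    intro j hkj hjτ
    rw [etaEvent] at hmem
    split_ifs at hmem with hNeq
    · exact hmem j hkj (by omega)
    · exact hmem.1 j hkj (by omega)
  · intro hsurv
    by_cases h : ∀ j, τ ≤ j → j < N → 0 < resid x (s ω) j
    · refine ⟨N, ⟨hτN, le_rfl⟩, ?_⟩
      rw [etaEvent, if_pos rfl]
      intro j hkj hjN
      by_cases hjτ : j < τ
      · exact hsurv j hkj hjτ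
      · exact h j (by omega) hjN
    · push_neg at h
      obtain ⟨j, hτj, hjN, hj⟩ := h
      obtain ⟨t', h1, h2, h3, h4⟩ := first_hit x (s ω) τ j hτj hj
      refine ⟨t', ⟨h1, by omega⟩, ?_⟩
      rw [etaEvent, if_neg (by omega)]
      refine ⟨fun i hki hit' => ?_, h4⟩
      by_cases hiτ : i < τ
      · exact hsurv i hki hiτ
      · exact h3 i (by omega) hit'

lemma hit_union (N : ℕ) (x : ℕ → ℝ) (s : Ω → ℕ → ℝ) (a : ℕ) (haN : a ≤ N) :
    ⋃ t ∈ Finset.Icc a N, hitE x s a t = hitB x s a N := by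
  ext ω
  simp only [Set.mem_iUnion, Finset.mem_Icc, exists_prop, hitB, hitE, Set.mem_setOf_eq]
  constructor
  · rintro ⟨t, ⟨h1, h2⟩, _, h4⟩; exact ⟨t, h1, h2, h4⟩
  · rintro ⟨t, h1, h2, h3⟩
    obtain ⟨t', g1, g2, g3, g4⟩ := first_hit x (s ω) a t h1 h3
    exact ⟨t', ⟨g1, by omega⟩, g3, g4⟩

lemma eta_disjoint (N : ℕ) (x : ℕ → ℝ) (s : Ω → ℕ → ℝ) (k : ℕ) {t t' : ℕ}
    (hkt : k ≤ t) (ht'N : t' ≤ N) (h : t < t') :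
    Disjoint (etaEvent N x s k t) (etaEvent N x s k t') := by
  rw [Set.disjoint_left]
  intro ω h1 h2
  rw [etaEvent, if_neg (by omega)] at h1
  have hpos : 0 < resid x (s ω) t := by
    rw [etaEvent] at h2
    split_ifs at h2 with hNeq
    · exact h2 t hkt (by omega)
    · exact h2.1 t hkt h
  exact absurd h1.2 (not_le.2 hpos)

lemma hitE_disjoint (x : ℕ → ℝ) (s : Ω → ℕ → ℝ) (a : ℕ) {t t' : ℕ}
    (hat : a ≤ t) (h : t < t') :
    Disjoint (hitE x s a t) (hitE (Ω := Ω) x s a t') := by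
  rw [Set.disjoint_left]
  intro ω h1 h2
  exact absurd h1.2 (not_le.2 (h2.1 t hat h))

lemma eta_sum (N : ℕ) (P : Measure Ω) [IsProbabilityMeasure P]
    (s : Ω → ℕ → ℝ) (hmeas : Measurable s) (x : ℕ → ℝ) (k τ : ℕ)
    (hkτ : k ≤ τ) (hτN : τ ≤ N) :
    ∑ t ∈ Finset.Icc τ N, (P (etaEvent N x s k t)).toReal
      = (P (surv x s k τ)).toReal := by
  have hd : Set.PairwiseDisjoint (↑(Finset.Icc τ N)) (etaEvent N x s k) := by
    intro t ht t' ht' hne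
    simp only [Finset.coe_Icc, Set.mem_Icc] at ht ht'
    rcases hne.lt_or_gt with hlt | hlt
    · exact eta_disjoint N x s k (by omega) (by omega) hlt
    · exact (eta_disjoint N x s k (by omega) (by omega) hlt).symm
  have h := measure_biUnion_finset (μ := P) hd (fun t _ => meas_eta hmeas N k t)
  rw [eta_union N x s k τ hkτ hτN] at h
  rw [← ENNReal.toReal_sum (fun t _ => measure_ne_top P _), ← h]

lemma zeta_eq (N : ℕ) (P : Measure Ω) [IsProbabilityMeasure P]
    (s : Ω → ℕ → ℝ) (hmeas : Measurable s) (c0 : ℝ) (x : ℕ → ℝ) (a : ℕ)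
    (haN : a ≤ N) :
    zetaPrice N P s c0 x a = c0 * (P (hitB x s a N)).toReal := by
  have h0 : {ω : Ω | resid x (s ω) a ≤ 0} = hitE x s a a := by
    ext ω
    simp only [hitE, Set.mem_setOf_eq]
    constructor
    · intro h; exact ⟨fun j h1 h2 => absurd h2 (by omega), h⟩
    · rintro ⟨-, h⟩; exact h
  have hIcc : Finset.Icc a N = insert a (Finset.Icc (a + 1) N) := by
    ext i; simp only [Finset.mem_Icc, Finset.mem_insert]; omega
  have hnot : a ∉ Finset.Icc (a + 1) N := by simp
  have hd : Set.PairwiseDisjoint (↑(Finset.Icc a N)) (hitE x s a) := by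
    intro t ht t' ht' hne
    simp only [Finset.coe_Icc, Set.mem_Icc] at ht ht'
    rcases hne.lt_or_gt with hlt | hlt
    · exact hitE_disjoint x s a (by omega) hlt
    · exact (hitE_disjoint x s a (by omega) hlt).symm
  have h := measure_biUnion_finset (μ := P) hd (fun t _ => meas_hitE hmeas a t)
  rw [hit_union N x s a haN] at h
  have hsum : (P {ω : Ω | resid x (s ω) a ≤ 0}).toReal +
      ∑ t ∈ Finset.Icc (a + 1) N, (P (hitE x s a t)).toReal
      = ∑ t ∈ Finset.Icc a N, (P (hitE x s a t)).toReal := by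
    rw [hIcc, Finset.sum_insert hnot, h0]
  have hzp : zetaPrice N P s c0 x a
      = c0 * ((P {ω : Ω | resid x (s ω) a ≤ 0}).toReal +
        ∑ t ∈ Finset.Icc (a + 1) N, (P (hitE x s a t)).toReal) := rfl
  rw [hzp, hsum, ← ENNReal.toReal_sum (fun t _ => measure_ne_top P _), ← h]

lemma prob_toReal_le_one (P : Measure Ω) [IsProbabilityMeasure P] (A : Set Ω) :
    (P A).toReal ≤ 1 := by
  have h := ENNReal.toReal_mono ENNReal.one_ne_top (prob_le_one (μ := P) (s := A))
  simpa using h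

lemma zeta_nonneg (N : ℕ) (P : Measure Ω) [IsProbabilityMeasure P]
    (s : Ω → ℕ → ℝ) (c0 : ℝ) (hc0 : 0 ≤ c0) (x : ℕ → ℝ) (a : ℕ) :
    0 ≤ zetaPrice N P s c0 x a := by
  unfold zetaPrice
  have h1 : (0:ℝ) ≤ (P {ω : Ω | resid x (s ω) a ≤ 0}).toReal := ENNReal.toReal_nonneg
  have h2 : (0:ℝ) ≤ ∑ t ∈ Finset.Icc (a + 1) N,
      (P {ω : Ω | (∀ j, a ≤ j → j < t → 0 < resid x (s ω) j) ∧
        resid x (s ω) t ≤ 0}).toReal :=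
    Finset.sum_nonneg fun t _ => ENNReal.toReal_nonneg
  nlinarith

lemma zeta_le (N : ℕ) (P : Measure Ω) [IsProbabilityMeasure P]
    (s : Ω → ℕ → ℝ) (hmeas : Measurable s) (c0 : ℝ) (hc0 : 0 ≤ c0)
    (x : ℕ → ℝ) (a : ℕ) (haN : a ≤ N) :
    zetaPrice N P s c0 x a ≤ c0 := by
  rw [zeta_eq N P s hmeas c0 x a haN]
  have h := prob_toReal_le_one P (hitB x s a N)
  nlinarith [ENNReal.toReal_nonneg (a := P (hitB x s a N))]

lemma zeta_compare (N : ℕ) (P : Measure Ω) [IsProbabilityMeasure P]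
    (s : Ω → ℕ → ℝ) (hmeas : Measurable s) (c0 : ℝ) (hc0 : 0 ≤ c0)
    (x : ℕ → ℝ) (k τ : ℕ) (hkτ : k ≤ τ) (hτN : τ ≤ N) :
    zetaPrice N P s c0 x k ≤ zetaPrice N P s c0 x τ
      + c0 * (1 - (P (surv x s k τ)).toReal) := by
  rw [zeta_eq N P s hmeas c0 x k (hkτ.trans hτN), zeta_eq N P s hmeas c0 x τ hτN]
  have hsub : hitB x s k N ⊆ hitB x s τ N ∪ (surv x s k τ)ᶜ := by
    rintro ω ⟨t, h1, h2, h3⟩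
    by_cases h : τ ≤ t
    · exact Or.inl ⟨t, h, h2, h3⟩
    · right
      intro hsv
      exact absurd h3 (not_le.2 (hsv t h1 (by omega)))
  have h1 : P (hitB x s k N) ≤ P (hitB x s τ N) + P ((surv x s k τ)ᶜ) :=
    (measure_mono hsub).trans (measure_union_le _ _)
  have h2 : (P (hitB x s k N)).toReal
      ≤ (P (hitB x s τ N)).toReal + (P ((surv x s k τ)ᶜ)).toReal := by
    have hne : P (hitB x s τ N) + P ((surv x s k τ)ᶜ) ≠ ⊤ :=
      ENNReal.add_ne_top.2 ⟨measure_ne_top P _, measure_ne_top P _⟩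
    have := ENNReal.toReal_mono hne h1
    rwa [ENNReal.toReal_add (measure_ne_top P _) (measure_ne_top P _)] at this
  have hcompl : (P ((surv x s k τ)ᶜ)).toReal = 1 - (P (surv x s k τ)).toReal := by
    rw [prob_compl_eq_one_sub (meas_surv hmeas k τ),
      ENNReal.toReal_sub_of_le prob_le_one ENNReal.one_ne_top]
    simp
  rw [hcompl] at h2
  nlinarith

end ICAux

/-- Main incentive-compatibility inequality (inequality (sh20)): fix
`k ∈ {1,…,N}`, suppose `R ≥ c_0 > 0`, let `q ≥ 0`, and let `ã_k, …, ã_N ≥ 0` satisfy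
`Σ_{t=k}^N ã_t ≤ q`.  Then
`R · Σ_{t=k}^N P(η_t) · ( q − Σ_{τ=k}^t ã_τ ) ≥ (q − ã_k) · ζ_k(x) − Σ_{t=k+1}^N ζ_t(x) · ã_t`. -/
theorem main_incentive_compatibility_inequality
    (N : ℕ) (hN : 1 ≤ N)
    {Ω : Type*} [MeasurableSpace Ω] (P : Measure Ω) [IsProbabilityMeasure P]
    (s : Ω → ℕ → ℝ) (hmeas : Measurable s)
    (hs : ∀ ω, ∀ j, j < N → 0 ≤ s ω j)
    (x : ℕ → ℝ) (hx : ∀ j, 1 ≤ j → j ≤ N → 0 ≤ x j)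
    (c0 R : ℝ) (hc0 : 0 < c0) (hR : c0 ≤ R)
    (k : ℕ) (hk : 1 ≤ k) (hkN : k ≤ N)
    (q : ℝ) (hq : 0 ≤ q)
    (b : ℕ → ℝ) (hb : ∀ t ∈ Finset.Icc k N, 0 ≤ b t)
    (hbq : ∑ t ∈ Finset.Icc k N, b t ≤ q) :
    R * ∑ t ∈ Finset.Icc k N,
        (P (etaEvent N x s k t)).toReal * (q - ∑ τ ∈ Finset.Icc k t, b τ) ≥
      (q - b k) * zetaPrice N P s c0 x k -
        ∑ t ∈ Finset.Icc (k + 1) N, zetaPrice N P s c0 x t * b t := by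
  classical
  have hsum : ∀ τ, k ≤ τ → τ ≤ N →
      ∑ t ∈ Finset.Icc τ N, (P (etaEvent N x s k t)).toReal
        = (P (ICAux.surv x s k τ)).toReal :=
    fun τ h1 h2 => ICAux.eta_sum N P s hmeas x k τ h1 h2
  have hp1 : ∑ t ∈ Finset.Icc k N, (P (etaEvent N x s k t)).toReal = 1 := by
    rw [hsum k le_rfl hkN, ICAux.surv_self]
    simp
  -- basic bookkeeping about b
  have hbk : b k ≤ ∑ t ∈ Finset.Icc k N, b t :=
    Finset.single_le_sum (fun t ht => hb t ht) (by simp [Finset.mem_Icc]; omega)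
  have hsplitb : ∑ t ∈ Finset.Icc k N, b t
      = b k + ∑ t ∈ Finset.Icc (k + 1) N, b t := by
    rw [show Finset.Icc k N = insert k (Finset.Icc (k + 1) N) by
      ext i; simp only [Finset.mem_Icc, Finset.mem_insert]; omega,
      Finset.sum_insert (by simp)]
  have hB2 : ∑ t ∈ Finset.Icc (k + 1) N, b t ≤ q - b k := by linarith
  have hqbk : 0 ≤ q - b k := by linarith
  -- rewrite the LHS sum
  have hLHS : ∑ t ∈ Finset.Icc k N,
      (P (etaEvent N x s k t)).toReal * (q - ∑ τ ∈ Finset.Icc k t, b τ)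
      = (q - b k) - ∑ τ ∈ Finset.Icc (k + 1) N,
          b τ * (P (ICAux.surv x s k τ)).toReal := by
    have step1 : ∀ t ∈ Finset.Icc k N,
        (P (etaEvent N x s k t)).toReal * (q - ∑ τ ∈ Finset.Icc k t, b τ)
        = (P (etaEvent N x s k t)).toReal * (q - b k)
          - ∑ τ ∈ Finset.Icc (k + 1) N,
              (if τ ≤ t then (P (etaEvent N x s k t)).toReal * b τ else 0) := by
      intro t ht
      simp only [Finset.mem_Icc] at ht
      have e2 : ∑ τ ∈ Finset.Icc k t, b τ
          = b k + ∑ τ ∈ Finset.Icc (k + 1) t, b τ := by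
        rw [show Finset.Icc k t = insert k (Finset.Icc (k + 1) t) by
          ext i; simp only [Finset.mem_Icc, Finset.mem_insert]; omega,
          Finset.sum_insert (by simp)]
      have e3 : Finset.Icc (k + 1) t = (Finset.Icc (k + 1) N).filter (· ≤ t) := by
        ext i
        simp only [Finset.mem_Icc, Finset.mem_filter]
        omega
      have e4 : ∑ τ ∈ Finset.Icc (k + 1) t, b τ
          = ∑ τ ∈ Finset.Icc (k + 1) N, (if τ ≤ t then b τ else 0) := by
        rw [e3, Finset.sum_filter]
      have e5 : ∑ τ ∈ Finset.Icc (k + 1) N,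
            (if τ ≤ t then (P (etaEvent N x s k t)).toReal * b τ else 0)
          = (P (etaEvent N x s k t)).toReal
              * ∑ τ ∈ Finset.Icc (k + 1) N, (if τ ≤ t then b τ else 0) := by
        rw [Finset.mul_sum]
        refine Finset.sum_congr rfl fun τ _ => ?_
        split <;> simp
      rw [e2, e4, e5]
      ring
    rw [Finset.sum_congr rfl step1, Finset.sum_sub_distrib]
    congr 1
    · rw [← Finset.sum_mul, hp1, one_mul]
    · rw [Finset.sum_comm]
      refine Finset.sum_congr rfl fun τ hτ => ?_
      simp only [Finset.mem_Icc] at hτ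
      have e6 : (Finset.Icc k N).filter (fun t => τ ≤ t) = Finset.Icc τ N := by
        ext i
        simp only [Finset.mem_Icc, Finset.mem_filter]
        omega
      calc ∑ t ∈ Finset.Icc k N,
            (if τ ≤ t then (P (etaEvent N x s k t)).toReal * b τ else 0)
          = ∑ t ∈ (Finset.Icc k N).filter (fun t => τ ≤ t),
              (P (etaEvent N x s k t)).toReal * b τ := (Finset.sum_filter _ _).symm
        _ = ∑ t ∈ Finset.Icc τ N, (P (etaEvent N x s k t)).toReal * b τ := by rw [e6]
        _ = (∑ t ∈ Finset.Icc τ N, (P (etaEvent N x s k t)).toReal) * b τ :=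
            (Finset.sum_mul _ _ _).symm
        _ = b τ * (P (ICAux.surv x s k τ)).toReal := by
            rw [hsum τ (by omega) hτ.2, mul_comm]
  -- key termwise comparison
  have hζk_le : zetaPrice N P s c0 x k ≤ R :=
    (ICAux.zeta_le N P s hmeas c0 hc0.le x k hkN).trans hR
  have hkey : ∀ τ ∈ Finset.Icc (k + 1) N,
      b τ * (R * (P (ICAux.surv x s k τ)).toReal - zetaPrice N P s c0 x τ)
      ≤ b τ * (R - zetaPrice N P s c0 x k) := by
    intro τ hτ
    simp only [Finset.mem_Icc] at hτ
    have hbτ : 0 ≤ b τ := hb τ (by simp only [Finset.mem_Icc]; omega)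
    refine mul_le_mul_of_nonneg_left ?_ hbτ
    have hcomp := ICAux.zeta_compare N P s hmeas c0 hc0.le x k τ (by omega) hτ.2
    have hA1 : (P (ICAux.surv x s k τ)).toReal ≤ 1 := ICAux.prob_toReal_le_one P _
    nlinarith [mul_nonneg (sub_nonneg.2 hR) (sub_nonneg.2 hA1)]
  have h1 : ∑ τ ∈ Finset.Icc (k + 1) N,
      b τ * (R * (P (ICAux.surv x s k τ)).toReal - zetaPrice N P s c0 x τ)
      ≤ (q - b k) * (R - zetaPrice N P s c0 x k) := by
    calc ∑ τ ∈ Finset.Icc (k + 1) N,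
          b τ * (R * (P (ICAux.surv x s k τ)).toReal - zetaPrice N P s c0 x τ)
        ≤ ∑ τ ∈ Finset.Icc (k + 1) N, b τ * (R - zetaPrice N P s c0 x k) :=
          Finset.sum_le_sum hkey
      _ = (∑ τ ∈ Finset.Icc (k + 1) N, b τ) * (R - zetaPrice N P s c0 x k) :=
          (Finset.sum_mul _ _ _).symm
      _ ≤ (q - b k) * (R - zetaPrice N P s c0 x k) :=
          mul_le_mul_of_nonneg_right hB2 (by linarith)
  have hexp : ∑ τ ∈ Finset.Icc (k + 1) N,
      b τ * (R * (P (ICAux.surv x s k τ)).toReal - zetaPrice N P s c0 x τ)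
      = R * ∑ τ ∈ Finset.Icc (k + 1) N, b τ * (P (ICAux.surv x s k τ)).toReal
        - ∑ τ ∈ Finset.Icc (k + 1) N, zetaPrice N P s c0 x τ * b τ := by
    rw [Finset.sum_congr rfl (fun τ _ => by
      show b τ * (R * (P (ICAux.surv x s k τ)).toReal - zetaPrice N P s c0 x τ)
        = R * (b τ * (P (ICAux.surv x s k τ)).toReal) - zetaPrice N P s c0 x τ * b τ
      ring), Finset.sum_sub_distrib, ← Finset.mul_sum]
  rw [ge_iff_le, hLHS]
  nlinarith [h1, hexp]
end
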